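/- arXiv:2204.05275 — 6 statements merged into one kernel-verified Lean document; each statement's English description precedes it below -/
import Mathlib

section
/- For any p, q ∈ [1/2, 1) with p > q, the KL divergence of Bernoulli distributions satisfies KL(p ∥ q) ≤ KL(q ∥ p), where KL(p ∥ q) = p·log(p/q) + (1−p)·log((1−p)/(1−q)). -/
/-!
For fixed `q`, the function `G x = KL(q ∥ x) - KL(x ∥ q)` vanishes at `x = q`, and
`G' x = (x - q) / (x (1 - x)) - log (x (1 - q) / (q (1 - x)))`.
The logarithmic–geometric mean inequality `log (a / b) ≤ (a - b) / √(ab)` bounds the logarithm by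
`(x - q) / √(x (1 - x) q (1 - q))`, and since `t (1 - t)` decreases on `[1/2, 1)` this is at most
`(x - q) / (x (1 - x))`. Hence `G` is nondecreasing on `[q, 1)`, so `G p ≥ 0`.
-/

/-- KL divergence between Bernoulli(a) and Bernoulli(b). -/
noncomputable def bernKL (a b : ℝ) : ℝ :=
  a * Real.log (a / b) + (1 - a) * Real.log ((1 - a) / (1 - b))

open Real

theorem log_div_le_sub_div_sqrt_mul {a b : ℝ} (hb : 0 < b) (hab : b ≤ a) :
    log (a / b) ≤ (a - b) / √(a * b) := by
  have ha : 0 < a := hb.trans_le hab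
  set t := √a / √b with ht
  have ht₀ : 0 < t := by positivity
  have hlog : log (a / b) = 2 * log t := by
    rw [ht, log_div ha.ne' hb.ne', log_div (by positivity) (by positivity), log_sqrt ha.le,
      log_sqrt hb.le]
    ring
  have hsinh : 2 * log t ≤ t - t⁻¹ := by
    have : 0 ≤ log t := log_nonneg <| (one_le_div (by positivity)).2 (sqrt_le_sqrt hab)
    linarith [self_le_sinh_iff.2 this, sinh_log ht₀]
  have hsub : t - t⁻¹ = (a - b) / √(a * b) := by
    rw [ht, sqrt_mul ha.le, inv_div, div_sub_div _ _ (by positivity) (by positivity),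
      mul_self_sqrt ha.le, mul_self_sqrt hb.le, mul_comm]
  rw [hlog, ← hsub]
  exact hsinh

theorem hasDerivAt_bernKL_right {a x : ℝ} (ha₀ : a ≠ 0) (ha₁ : a ≠ 1) (hx₀ : x ≠ 0)
    (hx₁ : x ≠ 1) : HasDerivAt (bernKL a) ((1 - a) / (1 - x) - a / x) x := by
  have h₁ : (1 : ℝ) - x ≠ 0 := sub_ne_zero.2 (Ne.symm hx₁)
  have h₂ : (1 : ℝ) - a ≠ 0 := sub_ne_zero.2 (Ne.symm ha₁)
  have := ((((hasDerivAt_const x a).fun_div (hasDerivAt_id' x) hx₀).log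
    (div_ne_zero ha₀ hx₀)).const_mul a).add ((((hasDerivAt_const x (1 - a)).fun_div
      ((hasDerivAt_id' x).const_sub 1) h₁).log (div_ne_zero h₂ h₁)).const_mul (1 - a))
  refine this.congr_deriv ?_
  field_simp
  ring

theorem hasDerivAt_bernKL_left {x b : ℝ} (hb₀ : b ≠ 0) (hb₁ : b ≠ 1) (hx₀ : x ≠ 0)
    (hx₁ : x ≠ 1) :
    HasDerivAt (fun x => bernKL x b) (log (x / b) - log ((1 - x) / (1 - b))) x := by
  have h₁ : (1 : ℝ) - x ≠ 0 := sub_ne_zero.2 (Ne.symm hx₁)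
  have h₂ : (1 : ℝ) - b ≠ 0 := sub_ne_zero.2 (Ne.symm hb₁)
  have := ((hasDerivAt_id' x).mul
      (((hasDerivAt_id' x).div_const b).log (div_ne_zero hx₀ hb₀))).add
    (((hasDerivAt_id' x).const_sub 1).mul
      ((((hasDerivAt_id' x).const_sub 1).div_const (1 - b)).log (div_ne_zero h₁ h₂)))
  refine this.congr_deriv ?_
  field_simp
  ring

@[simp]
theorem bernKL_self (a : ℝ) : bernKL a a = 0 := by
  simp [bernKL]

theorem log_div_sub_log_div_le_div_sub_div {q x : ℝ} (hq : 1 / 2 ≤ q) (hqx : q ≤ x)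
    (hx : x < 1) :
    log (x / q) - log ((1 - x) / (1 - q)) ≤ (1 - q) / (1 - x) - q / x := by
  have hq₀ : 0 < q := by linarith
  have hx₀ : 0 < x := by linarith
  have hx₁ : 0 < 1 - x := by linarith
  have hq₁ : 0 < 1 - q := by linarith
  have hba : q * (1 - x) ≤ x * (1 - q) := by nlinarith
  have hlog : log (x / q) - log ((1 - x) / (1 - q)) = log (x * (1 - q) / (q * (1 - x))) := by
    rw [← log_div (by positivity) (by positivity)]
    congr 1
    field_simp
  have hsqrt : x * (1 - x) ≤ √(x * (1 - q) * (q * (1 - x))) := by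
    rw [le_sqrt (by positivity) (by positivity)]
    nlinarith [mul_nonneg (mul_nonneg hx₀.le hx₁.le)
      (mul_nonneg (sub_nonneg.2 hqx) (by linarith : 0 ≤ x + q - 1))]
  calc log (x / q) - log ((1 - x) / (1 - q))
      ≤ (x * (1 - q) - q * (1 - x)) / √(x * (1 - q) * (q * (1 - x))) := by
        rw [hlog]; exact log_div_le_sub_div_sqrt_mul (by positivity) hba
    _ ≤ (x * (1 - q) - q * (1 - x)) / (x * (1 - x)) :=
        div_le_div_of_nonneg_left (by linarith) (by positivity) hsqrt
    _ = (1 - q) / (1 - x) - q / x := by field_simp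

theorem stmt0 (p q : ℝ) (hp : p ∈ Set.Ico (1/2 : ℝ) 1) (hq : q ∈ Set.Ico (1/2 : ℝ) 1)
    (hpq : q < p) : bernKL p q ≤ bernKL q p := by
  obtain ⟨hq₀, hq₁⟩ := hq
  have hderiv : ∀ x ∈ Set.Ioo (0 : ℝ) 1, HasDerivAt (fun x => bernKL q x - bernKL x q)
      ((1 - q) / (1 - x) - q / x - (log (x / q) - log ((1 - x) / (1 - q)))) x := by
    rintro x ⟨hx₀, hx₁⟩
    exact (hasDerivAt_bernKL_right (by linarith) hq₁.ne hx₀.ne' hx₁.ne).sub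
      (hasDerivAt_bernKL_left (by linarith) hq₁.ne hx₀.ne' hx₁.ne)
  have hsub : Set.Ico q 1 ⊆ Set.Ioo 0 1 := fun x hx => ⟨by linarith [hx.1], hx.2⟩
  have hmono : MonotoneOn (fun x => bernKL q x - bernKL x q) (Set.Ico q 1) := by
    refine monotoneOn_of_deriv_nonneg (convex_Ico q 1)
      (fun x hx => (hderiv x (hsub hx)).continuousAt.continuousWithinAt)
      (fun x hx => (hderiv x (hsub (interior_subset hx))).differentiableAt.differentiableWithinAt)
      (fun x hx => ?_)
    rw [(hderiv x (hsub (interior_subset hx))).deriv, sub_nonneg]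
    rw [interior_Ico] at hx
    exact log_div_sub_log_div_le_div_sub_div hq₀ hx.1.le hx.2
  simpa using hmono ⟨le_rfl, hq₁⟩ ⟨hpq.le, hp.2⟩ hpq.le
end

section
/- Let γ ∈ (0,1), P* ∈ ℝ^{S×S} row-stochastic, ρ a probability vector over S, d*ᵀ = (1−γ)ρᵀ(I−γP*)⁻¹, and V̂, b* ∈ ℝ^S with 0 ≤ V̂ ≤ (1/(1−γ))·1, b* ≥ 0, and V̂ − γP*V̂ + 2b* ≥ 0. Then Σ_s d*(s)·Var_{P*_{s,·}}(V̂) ≤ 2/(γ²(1−γ)) + (4/(γ²(1−γ)))·⟨d*, b*⟩, where Var_{P*_{s,·}}(V̂) is the variance of V̂ under the s-th row of P*. -/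
/-- Variance of a vector `V` with respect to a probability vector `q`. -/
noncomputable def Var {S : Type*} [Fintype S] (q V : S → ℝ) : ℝ :=
  (∑ s, q s * (V s)^2) - (∑ s, q s * V s)^2

/-! With `A = V̂ - γ P* V̂`, expanding `(γ P* V̂)² = (V̂ - A)²` and using `γ² ≤ γ` gives
`γ² Var_{P*}(V̂) ≤ (γ P* (V̂²) - V̂²) + 2 V̂ A` statewise. Weighted by `d*`, the identity
`d*ᵀ(I - γP*) = (1-γ)ρᵀ` turns the first term into `-(1-γ) ρ(V̂²) ≤ 0` and `⟨d*, A⟩` into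
`(1-γ) ⟨ρ, V̂⟩ ≤ 1`, while `V̂ A ≤ (A + 2b*)/(1-γ)` because `A + 2b* ≥ 0`. -/

open Matrix Finset

theorem sq_mul_var_le {S : Type*} [Fintype S] {q : S → ℝ} (hq : ∀ s, 0 ≤ q s) {γ : ℝ}
    (hγ0 : 0 ≤ γ) (hγ1 : γ ≤ 1) (V : S → ℝ) (v : ℝ) :
    γ ^ 2 * Var q V
      ≤ 2 * v * (v - γ * ∑ s, q s * V s) - (v ^ 2 - γ * ∑ s, q s * V s ^ 2) := by
  have hm2 : 0 ≤ ∑ s, q s * V s ^ 2 := sum_nonneg fun s _ => mul_nonneg (hq s) (sq_nonneg _)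
  unfold Var
  nlinarith [mul_nonneg (mul_nonneg hγ0 (sub_nonneg.2 hγ1)) hm2,
    sq_nonneg (v - γ * ∑ s, q s * V s)]

section Discounted

variable {S : Type*} [Fintype S] [DecidableEq S] {P : Matrix S S ℝ} {γ : ℝ}

theorem det_one_sub_smul_ne_zero (hP : P ∈ rowStochastic ℝ S) (hγ0 : 0 ≤ γ) (hγ1 : γ < 1) :
    (1 - γ • P).det ≠ 0 := by
  refine det_ne_zero_of_sum_row_lt_diag fun k => ?_
  have hPkk : P k k ≤ 1 := le_one_of_mem_rowStochastic hP
  have hoff : ∑ j ∈ univ.erase k, ‖(1 - γ • P) k j‖ = γ * (1 - P k k) := by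
    rw [← sum_row_of_mem_rowStochastic hP k, ← sum_erase_add _ _ (mem_univ k),
      add_sub_cancel_right, mul_sum]
    refine sum_congr rfl fun j hj => ?_
    rw [Matrix.sub_apply, one_apply_ne (ne_of_mem_erase hj).symm, Matrix.smul_apply, smul_eq_mul,
      zero_sub, norm_neg, Real.norm_of_nonneg (mul_nonneg hγ0 (nonneg_of_mem_rowStochastic hP))]
  rw [hoff, Matrix.sub_apply, one_apply_eq, Matrix.smul_apply, smul_eq_mul,
    Real.norm_of_nonneg (by nlinarith)]
  nlinarith

theorem nonneg_of_vecMul_one_sub_smul (hP : P ∈ rowStochastic ℝ S) (hγ0 : 0 ≤ γ)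
    (hγ1 : γ < 1) {d x : S → ℝ} (hx : ∀ s, 0 ≤ x s) (hdx : d ᵥ* (1 - γ • P) = x) (s : S) :
    0 ≤ d s := by
  set f : S → ℝ := fun s => min (d s) 0
  have hf0 : ∀ s, f s ≤ 0 := fun s => min_le_right _ _
  have hf_sub : ∀ s, γ * (f ᵥ* P) s ≤ f s := by
    intro s
    have hPs : ∀ t, 0 ≤ P t s := fun t => nonneg_of_mem_rowStochastic hP
    have hmono : (f ᵥ* P) s ≤ (d ᵥ* P) s :=
      sum_le_sum fun t _ => mul_le_mul_of_nonneg_right (min_le_left _ _) (hPs t)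
    have hnonpos : (f ᵥ* P) s ≤ 0 :=
      sum_nonpos fun t _ => mul_nonpos_of_nonpos_of_nonneg (hf0 t) (hPs t)
    have hds : d s = x s + γ * (d ᵥ* P) s := by
      have := congrFun hdx s
      rw [vecMul_sub, vecMul_one, vecMul_smul] at this
      simp only [Pi.sub_apply, Pi.smul_apply, smul_eq_mul] at this
      linarith
    exact le_min (by nlinarith [hx s]) (by nlinarith)
  -- `P` preserves total mass, so summing `γ fP ≤ f` over states forces `∑ f = 0`.
  have hmass : ∑ s, (f ᵥ* P) s = ∑ s, f s := by
    simpa [dotProduct, one_vecMul_of_mem_rowStochastic hP] using (dotProduct_mulVec f P 1).symm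
  have hsum : ∑ s, f s = 0 := by
    have : ∑ s, γ * (f ᵥ* P) s ≤ ∑ s, f s := sum_le_sum fun s _ => hf_sub s
    rw [← mul_sum, hmass] at this
    nlinarith [sum_nonpos fun s (_ : s ∈ univ) => hf0 s]
  have hfs := (sum_eq_zero_iff_of_nonpos fun s _ => hf0 s).1 hsum s (mem_univ s)
  exact min_eq_right_iff.1 hfs

theorem one_sub_smul_mulVec_apply (V : S → ℝ) (s : S) :
    ((1 - γ • P) *ᵥ V) s = V s - γ * (P *ᵥ V) s := by
  rw [sub_mulVec, one_mulVec, smul_mulVec, Pi.sub_apply, Pi.smul_apply, smul_eq_mul]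

theorem sq_mul_sum_mul_var_le (hP : P ∈ rowStochastic ℝ S) (hγ0 : 0 ≤ γ) (hγ1 : γ < 1)
    {ρ d V b : S → ℝ} (hρ0 : ∀ s, 0 ≤ ρ s) (hρ1 : ∑ s, ρ s = 1) (hd0 : ∀ s, 0 ≤ d s)
    (hflow : d ᵥ* (1 - γ • P) = (1 - γ) • ρ)
    (hV0 : ∀ s, 0 ≤ V s) (hV1 : ∀ s, V s ≤ 1 / (1 - γ)) (hb : ∀ s, 0 ≤ b s)
    (hpos : ∀ s, 0 ≤ ((1 - γ • P) *ᵥ V) s + 2 * b s) :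
    γ ^ 2 * ∑ s, d s * Var (P s) V ≤ 2 / (1 - γ) * (1 + 2 * (d ⬝ᵥ b)) := by
  set A := (1 - γ • P) *ᵥ V
  have hocc : ∀ W, d ⬝ᵥ ((1 - γ • P) *ᵥ W) = (1 - γ) * (ρ ⬝ᵥ W) := fun W => by
    rw [dotProduct_mulVec, hflow, smul_dotProduct, smul_eq_mul]
  have hvar : ∀ s, γ ^ 2 * Var (P s) V ≤ 2 * V s * A s - ((1 - γ • P) *ᵥ V ^ 2) s := by
    intro s
    rw [one_sub_smul_mulVec_apply, show A s = _ from one_sub_smul_mulVec_apply V s, Pi.pow_apply]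
    exact sq_mul_var_le (fun t => nonneg_of_mem_rowStochastic hP) hγ0 hγ1.le V (V s)
  have hcross : ∀ s, V s * A s ≤ 1 / (1 - γ) * (A s + 2 * b s) := fun s => by
    nlinarith [mul_le_mul_of_nonneg_right (hV1 s) (hpos s), mul_nonneg (hV0 s) (hb s)]
  have hρV : (1 - γ) * (ρ ⬝ᵥ V) ≤ 1 := by
    have : ρ ⬝ᵥ V ≤ 1 / (1 - γ) := by
      calc ρ ⬝ᵥ V ≤ ∑ s, ρ s * (1 / (1 - γ)) :=
            sum_le_sum fun s _ => mul_le_mul_of_nonneg_left (hV1 s) (hρ0 s)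
        _ = 1 / (1 - γ) := by rw [← sum_mul, hρ1, one_mul]
    rwa [le_div_iff₀' (sub_pos.2 hγ1)] at this
  have hρV2 : 0 ≤ ρ ⬝ᵥ V ^ 2 :=
    sum_nonneg fun s _ => mul_nonneg (hρ0 s) (sq_nonneg (V s))
  calc γ ^ 2 * ∑ s, d s * Var (P s) V
      ≤ ∑ s, d s * (2 * V s * A s - ((1 - γ • P) *ᵥ V ^ 2) s) := by
        rw [mul_sum]
        exact sum_le_sum fun s _ => by
          rw [mul_left_comm]; exact mul_le_mul_of_nonneg_left (hvar s) (hd0 s)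
    _ = 2 * ∑ s, d s * (V s * A s) - (1 - γ) * (ρ ⬝ᵥ V ^ 2) := by
        rw [← hocc, dotProduct, mul_sum, ← sum_sub_distrib]
        exact sum_congr rfl fun s _ => by ring
    _ ≤ 2 * ∑ s, d s * (1 / (1 - γ) * (A s + 2 * b s)) := by
        have := sum_le_sum fun s (_ : s ∈ univ) => mul_le_mul_of_nonneg_left (hcross s) (hd0 s)
        nlinarith [mul_nonneg (sub_pos.2 hγ1).le hρV2]
    _ = 2 / (1 - γ) * (d ⬝ᵥ A + 2 * (d ⬝ᵥ b)) := by
        rw [dotProduct, dotProduct, mul_sum, mul_sum, ← sum_add_distrib, mul_sum]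
        exact sum_congr rfl fun s _ => by ring
    _ ≤ 2 / (1 - γ) * (1 + 2 * (d ⬝ᵥ b)) := by
        have : 0 ≤ 2 / (1 - γ) := div_nonneg zero_le_two (sub_pos.2 hγ1).le
        rw [hocc]; gcongr

end Discounted

theorem stmt8 {S : Type*} [Fintype S] [DecidableEq S]
    (γ : ℝ) (hγ0 : 0 < γ) (hγ1 : γ < 1)
    (P : Matrix S S ℝ) (hP0 : ∀ s s', 0 ≤ P s s') (hP1 : ∀ s, ∑ s', P s s' = 1)
    (ρ : S → ℝ) (hρ0 : ∀ s, 0 ≤ ρ s) (hρ1 : ∑ s, ρ s = 1)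
    (dstar : S → ℝ)
    (hd : dstar = (1 - γ) • Matrix.vecMul ρ ((1 : Matrix S S ℝ) - γ • P)⁻¹)
    (Vhat bstar : S → ℝ)
    (hV0 : ∀ s, 0 ≤ Vhat s) (hV1 : ∀ s, Vhat s ≤ 1/(1-γ))
    (hb : ∀ s, 0 ≤ bstar s)
    (hpos : ∀ s, 0 ≤ Vhat s - γ * ∑ s', P s s' * Vhat s' + 2 * bstar s) :
    ∑ s, dstar s * Var (P s) Vhat
      ≤ 2 / (γ^2 * (1-γ)) + (4 / (γ^2 * (1-γ))) * ∑ s, dstar s * bstar s := by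
  have hP : P ∈ rowStochastic ℝ S := mem_rowStochastic_iff_sum.2 ⟨hP0, hP1⟩
  have hunit := isUnit_iff_ne_zero.2 (det_one_sub_smul_ne_zero hP hγ0.le hγ1)
  have hflow : dstar ᵥ* (1 - γ • P) = (1 - γ) • ρ := by
    rw [hd, smul_vecMul, vecMul_vecMul, nonsing_inv_mul _ hunit, vecMul_one]
  have hd0 := nonneg_of_vecMul_one_sub_smul hP hγ0.le hγ1
    (fun s => mul_nonneg (sub_pos.2 hγ1).le (hρ0 s)) hflow
  have hbound := sq_mul_sum_mul_var_le hP hγ0.le hγ1 hρ0 hρ1 hd0 hflow hV0 hV1 hb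
    fun s => by rw [one_sub_smul_mulVec_apply]; exact hpos s
  rw [← le_div_iff₀' (by positivity)] at hbound
  refine hbound.trans_eq ?_
  have : 1 - γ ≠ 0 := (sub_pos.2 hγ1).ne'
  rw [dotProduct]
  field_simp
  ring
end

section
/- Let H ≥ 1, P_h* ∈ ℝ^{S×S} row-stochastic, d_h* ∈ Δ(S) with (d_h*)ᵀP_h* = (d_{h+1}*)ᵀ, and V̂_h ∈ ℝ^S with 0 ≤ V̂_h ≤ H·1 for h = 1,…,H+1, V̂_{H+1} = 0. Suppose b_h* ≥ 0 and V̂_h + 2b_h* − P_h* V̂_{h+1} ≥ 0 entrywise for all h. Then for every h ∈ [H]: Σ_{j=h}^{H} Σ_s d_j*(s)·Var_{P_{j,s,·}*}(V̂_{j+1}) ≤ 3H² + 4H·Σ_{j=h}^{H} ⟨d_j*, b_j*⟩. -/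
open Finset

lemma sq_sub_sq_le_of_add_le {x y b c : ℝ} (hb : 0 ≤ b) (hxy0 : 0 ≤ x + y)
    (hxyc : x + y ≤ 2 * c) (hgap : 0 ≤ x + 2 * b - y) :
    x ^ 2 - y ^ 2 ≤ 2 * c * (x - y) + 4 * c * b := by
  nlinarith [mul_nonneg hgap (sub_nonneg.2 hxyc), mul_nonneg hb hxy0]

section

variable {S : Type*} [Fintype S]

def potential (c : ℝ) (q V : S → ℝ) : ℝ :=
  ∑ s, q s * (V s ^ 2 - 2 * c * V s)

lemma potential_eq_sum_sq_sub (c : ℝ) (q V : S → ℝ) :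
    potential c q V = ∑ s, q s * V s ^ 2 - 2 * c * ∑ s, q s * V s := by
  simp only [potential, mul_sub, sum_sub_distrib, mul_sum]
  congr 1
  exact sum_congr rfl fun s _ => by ring

lemma neg_sq_le_potential {q : S → ℝ} (hq0 : ∀ s, 0 ≤ q s) (hq1 : ∑ s, q s = 1)
    (c : ℝ) (V : S → ℝ) : -c ^ 2 ≤ potential c q V :=
  calc -c ^ 2 = ∑ s, q s * -c ^ 2 := by rw [← sum_mul, hq1, one_mul]
    _ ≤ potential c q V := sum_le_sum fun s _ =>
        mul_le_mul_of_nonneg_left (by nlinarith [sq_nonneg (V s - c)]) (hq0 s)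

lemma sum_mul_le_of_le {q V : S → ℝ} {c : ℝ} (hq0 : ∀ s, 0 ≤ q s) (hq1 : ∑ s, q s = 1)
    (hV : ∀ s, V s ≤ c) : ∑ s, q s * V s ≤ c :=
  calc ∑ s, q s * V s ≤ ∑ s, q s * c :=
        sum_le_sum fun s _ => mul_le_mul_of_nonneg_left (hV s) (hq0 s)
    _ = c := by rw [← sum_mul, hq1, one_mul]

lemma sum_mul_sum_mul_of_flow {P : S → S → ℝ} {d d' : S → ℝ}
    (hflow : ∀ t, ∑ s, d s * P s t = d' t) (f : S → ℝ) :
    ∑ s, d s * ∑ t, P s t * f t = ∑ t, d' t * f t := by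
  simp_rw [mul_sum, ← mul_assoc]
  rw [sum_comm]
  simp_rw [← sum_mul, hflow]

lemma Var_le_potential_sub {q W : S → ℝ} {x b c : ℝ} (hq0 : ∀ s, 0 ≤ q s)
    (hq1 : ∑ s, q s = 1) (hW0 : ∀ s, 0 ≤ W s) (hWc : ∀ s, W s ≤ c) (hx0 : 0 ≤ x)
    (hxc : x ≤ c) (hb : 0 ≤ b) (hgap : 0 ≤ x + 2 * b - ∑ s, q s * W s) :
    Var q W ≤ potential c q W - (x ^ 2 - 2 * c * x) + 4 * c * b := by
  have hy0 : 0 ≤ ∑ s, q s * W s := sum_nonneg fun s _ => mul_nonneg (hq0 s) (hW0 s)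
  have hyc := sum_mul_le_of_le hq0 hq1 hWc
  have hsq := sq_sub_sq_le_of_add_le (c := c) hb (by linarith) (by linarith) hgap
  rw [Var, potential_eq_sum_sq_sub]
  linarith

lemma sum_mul_Var_le_potential_sub {P : S → S → ℝ} {d d' b V V' : S → ℝ} {c : ℝ}
    (hP0 : ∀ s t, 0 ≤ P s t) (hP1 : ∀ s, ∑ t, P s t = 1) (hd0 : ∀ s, 0 ≤ d s)
    (hflow : ∀ t, ∑ s, d s * P s t = d' t) (hV0 : ∀ s, 0 ≤ V s) (hVc : ∀ s, V s ≤ c)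
    (hV'0 : ∀ s, 0 ≤ V' s) (hV'c : ∀ s, V' s ≤ c) (hb : ∀ s, 0 ≤ b s)
    (hgap : ∀ s, 0 ≤ V s + 2 * b s - ∑ t, P s t * V' t) :
    ∑ s, d s * Var (P s) V' ≤
      potential c d' V' - potential c d V + 4 * c * ∑ s, d s * b s :=
  calc ∑ s, d s * Var (P s) V'
      ≤ ∑ s, (d s * potential c (P s) V' - d s * (V s ^ 2 - 2 * c * V s)
          + 4 * c * (d s * b s)) := sum_le_sum fun s _ => by
        have hrow := mul_le_mul_of_nonneg_left (Var_le_potential_sub (hP0 s) (hP1 s) hV'0 hV'c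
          (hV0 s) (hVc s) (hb s) (hgap s)) (hd0 s)
        linarith
    _ = potential c d' V' - potential c d V + 4 * c * ∑ s, d s * b s := by
        rw [sum_add_distrib, sum_sub_distrib, ← mul_sum]
        simp only [potential]
        rw [sum_mul_sum_mul_of_flow hflow]

end

theorem stmt10_general {S : Type*} [Fintype S] (H : ℕ)
    (P : ℕ → S → S → ℝ) (d : ℕ → S → ℝ) (b : ℕ → S → ℝ) (V : ℕ → S → ℝ)
    (hP0 : ∀ h, 1 ≤ h → h ≤ H → ∀ s s', 0 ≤ P h s s')
    (hP1 : ∀ h, 1 ≤ h → h ≤ H → ∀ s, ∑ s', P h s s' = 1)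
    (hd0 : ∀ h, 1 ≤ h → h ≤ H + 1 → ∀ s, 0 ≤ d h s)
    (hd1 : ∀ h, 1 ≤ h → h ≤ H + 1 → ∑ s, d h s = 1)
    (hflow : ∀ h, 1 ≤ h → h ≤ H → ∀ s', ∑ s, d h s * P h s s' = d (h+1) s')
    (hV0 : ∀ h s, 1 ≤ h → h ≤ H + 1 → 0 ≤ V h s)
    (hV1 : ∀ h s, 1 ≤ h → h ≤ H + 1 → V h s ≤ (H : ℝ))
    (hVend : ∀ s, V (H+1) s = 0)
    (hb : ∀ h s, 0 ≤ b h s)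
    (hpos : ∀ h, 1 ≤ h → h ≤ H → ∀ s,
      0 ≤ V h s + 2 * b h s - ∑ s', P h s s' * V (h+1) s') :
    ∀ h, 1 ≤ h → h ≤ H →
      ∑ j ∈ Finset.Icc h H, ∑ s, d j s * Var (P j s) (V (j+1))
        ≤ 3 * (H : ℝ)^2 + 4 * (H : ℝ) * ∑ j ∈ Finset.Icc h H, ∑ s, d j s * b j s := by
  intro h hh1 hhH
  set Φ : ℕ → ℝ := fun j => potential H (d j) (V j)
  have step : ∀ j ∈ Icc h H, ∑ s, d j s * Var (P j s) (V (j+1)) ≤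
      Φ (j + 1) - Φ j + 4 * H * ∑ s, d j s * b j s := fun j hj => by
    obtain ⟨hhj, hjH⟩ := mem_Icc.1 hj
    exact sum_mul_Var_le_potential_sub (hP0 j (by omega) hjH) (hP1 j (by omega) hjH)
      (hd0 j (by omega) (by omega)) (hflow j (by omega) hjH)
      (fun s => hV0 j s (by omega) (by omega)) (fun s => hV1 j s (by omega) (by omega))
      (fun s => hV0 (j+1) s (by omega) (by omega)) (fun s => hV1 (j+1) s (by omega) (by omega))
      (hb j) (hpos j (by omega) hjH)
  have hΦend : Φ (H + 1) = 0 := by simp [Φ, potential, hVend]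
  have hΦh : -(H : ℝ) ^ 2 ≤ Φ h :=
    neg_sq_le_potential (hd0 h hh1 (by omega)) (hd1 h hh1 (by omega)) _ _
  calc ∑ j ∈ Icc h H, ∑ s, d j s * Var (P j s) (V (j+1))
      ≤ ∑ j ∈ Icc h H, (Φ (j + 1) - Φ j + 4 * H * ∑ s, d j s * b j s) := sum_le_sum step
    _ = Φ (H + 1) - Φ h + 4 * H * ∑ j ∈ Icc h H, ∑ s, d j s * b j s := by
        rw [sum_add_distrib, sum_Icc_sub hhH, mul_sum]
    _ ≤ 3 * (H : ℝ)^2 + 4 * (H : ℝ) * ∑ j ∈ Icc h H, ∑ s, d j s * b j s := by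
        nlinarith [sq_nonneg (H : ℝ)]

theorem stmt10 {S : Type*} [Fintype S] (H : ℕ) (hH : 1 ≤ H)
    (P : ℕ → S → S → ℝ) (d : ℕ → S → ℝ) (b : ℕ → S → ℝ) (V : ℕ → S → ℝ)
    (hP0 : ∀ h, 1 ≤ h → h ≤ H → ∀ s s', 0 ≤ P h s s')
    (hP1 : ∀ h, 1 ≤ h → h ≤ H → ∀ s, ∑ s', P h s s' = 1)
    (hd0 : ∀ h, 1 ≤ h → h ≤ H + 1 → ∀ s, 0 ≤ d h s)
    (hd1 : ∀ h, 1 ≤ h → h ≤ H + 1 → ∑ s, d h s = 1)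
    (hflow : ∀ h, 1 ≤ h → h ≤ H → ∀ s', ∑ s, d h s * P h s s' = d (h+1) s')
    (hV0 : ∀ h s, 1 ≤ h → h ≤ H + 1 → 0 ≤ V h s)
    (hV1 : ∀ h s, 1 ≤ h → h ≤ H + 1 → V h s ≤ (H : ℝ))
    (hVend : ∀ s, V (H+1) s = 0)
    (hb : ∀ h s, 0 ≤ b h s)
    (hpos : ∀ h, 1 ≤ h → h ≤ H → ∀ s,
      0 ≤ V h s + 2 * b h s - ∑ s', P h s s' * V (h+1) s') :
    ∀ h, 1 ≤ h → h ≤ H →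
      ∑ j ∈ Finset.Icc h H, ∑ s, d j s * Var (P j s) (V (j+1))
        ≤ 3 * (H : ℝ)^2 + 4 * (H : ℝ) * ∑ j ∈ Finset.Icc h H, ∑ s, d j s * b j s :=
  stmt10_general H P d b V hP0 hP1 hd0 hd1 hflow hV0 hV1 hVend hb hpos
end

section
/- For any probability vector d* over a finite set S with Σ_s d*(s) = 1, one has Σ_s d*(s)/√(min{d*(s), 1/S}) ≤ 2√S, where S = |S|. -/
/-!
Termwise, `d / √(min d (1/n)) = max (√d, d √n) ≤ √d + d √n`. Summing, the second part
contributes `√n` because `∑ d = 1`, and by Cauchy–Schwarz `∑ √d ≤ √(n ∑ d) = √n`.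
-/

open Finset Real

lemma Real.sum_sqrt_le_sqrt_sum_mul_sqrt_card {ι : Type*} (s : Finset ι) {f : ι → ℝ}
    (hf : ∀ i, 0 ≤ f i) : ∑ i ∈ s, √(f i) ≤ √(∑ i ∈ s, f i) * √(#s : ℝ) := by
  simpa using sum_sqrt_mul_sqrt_le s hf (g := fun _ ↦ 1) fun _ ↦ zero_le_one

lemma Real.div_sqrt_min_le_sqrt_add_div_sqrt {x : ℝ} (hx : 0 ≤ x) (t : ℝ) :
    x / √(min x t) ≤ √x + x / √t := by
  rcases le_total x t with hxt | htx
  · rw [min_eq_left hxt, div_sqrt]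
    exact le_add_of_nonneg_right (by positivity)
  · rw [min_eq_right htx]
    exact le_add_of_nonneg_left (sqrt_nonneg x)

theorem stmt11 {S : Type*} [Fintype S] (d : S → ℝ)
    (hd0 : ∀ s, 0 ≤ d s) (hd1 : ∑ s, d s = 1) :
    ∑ s, d s / Real.sqrt (min (d s) (1 / (Fintype.card S : ℝ)))
      ≤ 2 * Real.sqrt (Fintype.card S) := by
  set n : ℝ := (Fintype.card S : ℝ)
  have hterm : ∀ s, d s / √(min (d s) (1 / n)) ≤ √(d s) + d s * √n := fun s ↦ by
    simpa only [one_div, sqrt_inv, div_inv_eq_mul] using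
      div_sqrt_min_le_sqrt_add_div_sqrt (hd0 s) (1 / n)
  have hsqrt : ∑ s, √(d s) ≤ √n := by
    simpa [hd1] using sum_sqrt_le_sqrt_sum_mul_sqrt_card univ hd0
  calc ∑ s, d s / √(min (d s) (1 / n))
      ≤ ∑ s, (√(d s) + d s * √n) := sum_le_sum fun s _ ↦ hterm s
    _ = ∑ s, √(d s) + √n := by rw [sum_add_distrib, ← sum_mul, hd1, one_mul]
    _ ≤ 2 * √n := by linarith
end

section
/- Let γ ∈ [1/2, 1) and p = γ + 14(1−γ)²ε/γ, q = γ − 14(1−γ)²ε/γ with 14(1−γ)²ε/γ ≤ (1−γ)/2, and let c ∈ [0, 1/2]. Then KL((1−c)p + c ∥ (1−c)q + c) ≤ 12544·(1−γ)³·ε², where KL denotes the Bernoulli KL divergence. -/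
noncomputable def bernChiSq (a b : ℝ) : ℝ :=
  (a - b) ^ 2 / (b * (1 - b))

theorem bernKL_le_bernChiSq {a b : ℝ} (ha0 : 0 < a) (ha1 : a < 1) (hb0 : 0 < b) (hb1 : b < 1) :
    bernKL a b ≤ bernChiSq a b := by
  have hlog₁ : a * Real.log (a / b) ≤ a * (a / b - 1) :=
    mul_le_mul_of_nonneg_left (Real.log_le_sub_one_of_pos (by positivity)) ha0.le
  have hlog₂ : (1 - a) * Real.log ((1 - a) / (1 - b)) ≤ (1 - a) * ((1 - a) / (1 - b) - 1) :=
    mul_le_mul_of_nonneg_left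
      (Real.log_le_sub_one_of_pos (div_pos (by linarith) (by linarith))) (by linarith)
  have hsum : a * (a / b - 1) + (1 - a) * ((1 - a) / (1 - b) - 1) = bernChiSq a b := by
    have : 1 - b ≠ 0 := by linarith
    unfold bernChiSq
    field_simp
    ring
  unfold bernKL
  linarith

theorem mul_variance_le_variance_mix {c : ℝ} (q : ℝ) (hc0 : 0 ≤ c) (hc1 : c ≤ 1) :
    (1 - c) * (q * (1 - q)) ≤ ((1 - c) * q + c) * (1 - ((1 - c) * q + c)) := by
  have hgap : ((1 - c) * q + c) * (1 - ((1 - c) * q + c)) - (1 - c) * (q * (1 - q))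
      = c * (1 - c) * (1 - q) ^ 2 := by ring
  have : 0 ≤ c * (1 - c) * (1 - q) ^ 2 := by
    have : 0 ≤ 1 - c := by linarith
    positivity
  linarith

theorem bernChiSq_mix_le {c q : ℝ} (p : ℝ) (hc0 : 0 ≤ c) (hc1 : c < 1) (hq0 : 0 < q)
    (hq1 : q < 1) :
    bernChiSq ((1 - c) * p + c) ((1 - c) * q + c) ≤ bernChiSq p q := by
  have h1c : 0 < 1 - c := by linarith
  have hvar : 0 < q * (1 - q) := mul_pos hq0 (by linarith)
  have hvar_mix := mul_variance_le_variance_mix q hc0 hc1.le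
  unfold bernChiSq
  calc ((1 - c) * p + c - ((1 - c) * q + c)) ^ 2 / (((1 - c) * q + c) * (1 - ((1 - c) * q + c)))
      ≤ (1 - c) ^ 2 * (p - q) ^ 2 / ((1 - c) * (q * (1 - q))) := by
        rw [show (1 - c) * p + c - ((1 - c) * q + c) = (1 - c) * (p - q) by ring, mul_pow]
        gcongr
    _ = (1 - c) * ((p - q) ^ 2 / (q * (1 - q))) := by
        field_simp
    _ ≤ (p - q) ^ 2 / (q * (1 - q)) := by
        have : 0 ≤ (p - q) ^ 2 / (q * (1 - q)) := by positivity
        nlinarith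

theorem bernKL_mix_le_bernChiSq {c p q : ℝ} (hc0 : 0 ≤ c) (hc1 : c < 1) (hp0 : 0 < p)
    (hp1 : p < 1) (hq0 : 0 < q) (hq1 : q < 1) :
    bernKL ((1 - c) * p + c) ((1 - c) * q + c) ≤ bernChiSq p q :=
  (bernKL_le_bernChiSq (by nlinarith) (by nlinarith) (by nlinarith) (by nlinarith)).trans
    (bernChiSq_mix_le p hc0 hc1 hq0 hq1)

theorem one_sub_div_sq_le_variance {γ d : ℝ} (hγ1 : 1 / 2 ≤ γ) (hγ2 : γ < 1) (hd0 : 0 ≤ d)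
    (hd : d ≤ (1 - γ) / 2) :
    (1 - γ) / γ ^ 2 ≤ 16 * ((γ - d) * (1 - (γ - d))) := by
  have hvar : (3 * γ - 1) / 2 * (1 - γ) ≤ (γ - d) * (1 - (γ - d)) :=
    mul_le_mul (by linarith) (by linarith) (by linarith) (by linarith)
  have hcubic : 1 ≤ 8 * γ ^ 2 * (3 * γ - 1) := by nlinarith
  rw [div_le_iff₀ (by positivity)]
  nlinarith [mul_le_mul_of_nonneg_left hcubic (by linarith : (0 : ℝ) ≤ 1 - γ)]

theorem stmt15 (γ ε c : ℝ) (hγ1 : 1/2 ≤ γ) (hγ2 : γ < 1) (hε : 0 < ε)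
    (hcond : 14 * (1 - γ)^2 * ε / γ ≤ (1 - γ)/2)
    (hc0 : 0 ≤ c) (hc1 : c ≤ 1/2)
    (p q : ℝ) (hp : p = γ + 14 * (1 - γ)^2 * ε / γ) (hq : q = γ - 14 * (1 - γ)^2 * ε / γ) :
    bernKL ((1 - c) * p + c) ((1 - c) * q + c) ≤ 12544 * (1 - γ)^3 * ε^2 := by
  set d := 14 * (1 - γ) ^ 2 * ε / γ with hd
  have hγ0 : 0 < γ := by linarith
  have h1γ : 0 < 1 - γ := by linarith
  have hd0 : 0 < d := by positivity
  have hvar := one_sub_div_sq_le_variance hγ1 hγ2 hd0.le hcond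
  rw [← hq] at hvar
  have hq0 : 0 < q := by linarith
  have hq1 : q < 1 := by linarith
  calc bernKL ((1 - c) * p + c) ((1 - c) * q + c)
      ≤ bernChiSq p q :=
        bernKL_mix_le_bernChiSq hc0 (by linarith) (by linarith) (by linarith) hq0 hq1
    _ = 784 * (1 - γ) ^ 3 * ε ^ 2 * ((1 - γ) / γ ^ 2) / (q * (1 - q)) := by
        rw [bernChiSq, hp, hq, hd]
        field_simp
        ring
    _ ≤ 12544 * (1 - γ) ^ 3 * ε ^ 2 := by
        have : 0 ≤ 784 * (1 - γ) ^ 3 * ε ^ 2 := by positivity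
        rw [div_le_iff₀ (mul_pos hq0 (by linarith))]
        nlinarith [mul_le_mul_of_nonneg_left hvar this]
end

section
/- Let a₁ ≤ a₂ ≤ ⋯ ≤ a_H be nonnegative reals, and let x₁,…,x_H ∈ [0, x_max] satisfy Σ_{i=1}^H x_i ≥ x_sum. Then Σ_{i=1}^{H} x_i a_i ≥ x_max · Σ_{i=1}^{⌊x_sum/x_max⌋} a_i. -/
open Finset

/- Subtracting `c` from the first `k` weights leaves signed weights `x i - c * 1[i ≤ k]` that are
nonpositive exactly where `a ≤ t` and nonnegative where `a ≥ t`, so replacing each `a i` by the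
threshold `t` only lowers the sum; the result is `t * (∑ x - k * c) ≥ 0`. -/
theorem mul_sum_Icc_le_sum_mul_of_threshold {H k : ℕ} (hk : k ≤ H) {a x : ℕ → ℝ} {c t : ℝ}
    (ht : 0 ≤ t) (hhead : ∀ i ∈ Icc 1 k, a i ≤ t) (htail : ∀ i ∈ Ioc k H, t ≤ a i)
    (hx : ∀ i ∈ Icc 1 H, x i ∈ Set.Icc 0 c) (hmass : k * c ≤ ∑ i ∈ Icc 1 H, x i) :
    c * ∑ i ∈ Icc 1 k, a i ≤ ∑ i ∈ Icc 1 H, x i * a i := by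
  have hsplit (f : ℕ → ℝ) : ∑ i ∈ Icc 1 H, f i = ∑ i ∈ Icc 1 k, f i + ∑ i ∈ Ioc k H, f i := by
    have h := sum_Ioc_consecutive f k.zero_le hk
    simp only [← Icc_add_one_left_eq_Ioc, zero_add] at h ⊢
    exact h.symm
  have hxH : ∀ i ∈ Icc 1 k, i ∈ Icc 1 H := fun i hi => by
    simp only [mem_Icc] at hi ⊢; omega
  have head : ∑ i ∈ Icc 1 k, (x i - c) * t ≤ ∑ i ∈ Icc 1 k, (x i - c) * a i :=
    sum_le_sum fun i hi =>
      mul_le_mul_of_nonpos_left (hhead i hi) (sub_nonpos.2 (hx i (hxH i hi)).2)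
  have tail : ∑ i ∈ Ioc k H, x i * t ≤ ∑ i ∈ Ioc k H, x i * a i :=
    sum_le_sum fun i hi => mul_le_mul_of_nonneg_left (htail i hi)
      (hx i (by simp only [mem_Ioc, mem_Icc] at hi ⊢; omega)).1
  have mass : 0 ≤ t * (∑ i ∈ Icc 1 H, x i - k * c) := mul_nonneg ht (sub_nonneg.2 hmass)
  have hk_card : (#(Icc 1 k) : ℝ) = k := by simp
  rw [hsplit fun i => x i] at mass
  rw [hsplit fun i => x i * a i]
  simp only [sub_mul, sum_sub_distrib, ← sum_mul, sum_const, hk_card, nsmul_eq_mul, mul_sum]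
    at head tail mass ⊢
  linarith

theorem stmt18_general (H : ℕ) (a x : ℕ → ℝ) (xmax xsum : ℝ)
    (hxmax : 0 < xmax) (hxsum : 0 ≤ xsum)
    (hfloor : Nat.floor (xsum / xmax) ≤ H)
    (ha0 : ∀ i, 0 ≤ a i)
    (hamono : ∀ i j, 1 ≤ i → i ≤ j → j ≤ H → a i ≤ a j)
    (hx : ∀ i, 1 ≤ i → i ≤ H → x i ∈ Set.Icc 0 xmax)
    (hsum : xsum ≤ ∑ i ∈ Finset.Icc 1 H, x i) :
    xmax * ∑ i ∈ Finset.Icc 1 (Nat.floor (xsum / xmax)), a i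
      ≤ ∑ i ∈ Finset.Icc 1 H, x i * a i := by
  set k := ⌊xsum / xmax⌋₊
  obtain ⟨t, ht, hhead, htail⟩ :
      ∃ t, 0 ≤ t ∧ (∀ i ∈ Icc 1 k, a i ≤ t) ∧ ∀ i ∈ Ioc k H, t ≤ a i := by
    rcases k.eq_zero_or_pos with hk | hk
    · exact ⟨0, le_rfl, by simp [hk], fun i _ => ha0 i⟩
    · refine ⟨a k, ha0 k, fun i hi => ?_, fun i hi => ?_⟩
      · simp only [mem_Icc] at hi
        exact hamono i k hi.1 hi.2 hfloor
      · simp only [mem_Ioc] at hi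
        exact hamono k i hk hi.1.le hi.2
  have hmass : k * xmax ≤ xsum := (le_div_iff₀ hxmax).1 (Nat.floor_le (by positivity))
  exact mul_sum_Icc_le_sum_mul_of_threshold hfloor ht hhead htail
    (fun i hi => hx i (mem_Icc.1 hi).1 (mem_Icc.1 hi).2) (hmass.trans hsum)

theorem stmt18 (H : ℕ) (hH : 1 ≤ H) (a x : ℕ → ℝ) (xmax xsum : ℝ)
    (hxmax : 0 < xmax) (hxsum : 0 ≤ xsum)
    (hfloor : Nat.floor (xsum / xmax) ≤ H)
    (ha0 : ∀ i, 0 ≤ a i)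
    (hamono : ∀ i j, 1 ≤ i → i ≤ j → j ≤ H → a i ≤ a j)
    (hx : ∀ i, 1 ≤ i → i ≤ H → x i ∈ Set.Icc 0 xmax)
    (hsum : xsum ≤ ∑ i ∈ Finset.Icc 1 H, x i) :
    xmax * ∑ i ∈ Finset.Icc 1 (Nat.floor (xsum / xmax)), a i
      ≤ ∑ i ∈ Finset.Icc 1 H, x i * a i :=
  stmt18_general H a x xmax xsum hxmax hxsum hfloor ha0 hamono hx hsum
end
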